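/- Let d, p ≥ 1 be integers and define a_k by Σ_k a_k t^k = (1 + t + ⋯ + t^d)^p. Then the polynomial q(z,w) = (1+z+⋯+z^d)^p (1+w+⋯+w^d)^p satisfies q(z,w) = Σ_{i,j ≥ 0} c_{ij} S_{(i+j,j)}(z,w), where c_{ij} = a_{i+j}a_j − a_{i+j+1}a_{j−1} (with a_k = 0 for k < 0 or k > dp), and all c_{ij} are nonnegative. In particular q(z,w) is Schur positive. -/

import Mathlib

/-!
The coefficients of `1 + t + ⋯ + t^d` form a Pólya frequency sequence of order two: they are
nonnegative and `a (m + 1) * a (j - 1) ≤ a m * a j` whenever `j ≤ m`. This property survives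
multiplication of (Laurent) polynomials: writing both sides of the inequality for a product as
double convolution sums and symmetrising in the two summation indices, each symmetrised term is
a product of two nonpositive `2 × 2` minors, one for each factor. Hence the coefficients of
`(1 + t + ⋯ + t^d)^p` have the same property, which is exactly `c i j ≥ 0`.

The expansion holds for every sequence `a` supported in `[0, N]`: the coefficient of `z^U w^V`
in `∑ c i j S_{(i+j,j)}(z,w)` is `∑_{j ≤ min U V} c (U + V - 2j) j`, a telescoping sum equal to
`a U * a V`.
-/

open Polynomial LaurentPolynomial Finset

namespace LaurentPolynomial

variable {R : Type*} [Semiring R]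

lemma coeff_mul_eq_sum (f g : R[T;T⁻¹]) {S : Finset ℤ} (hS : g.coeff.support ⊆ S) (n : ℤ) :
    (f * g).coeff n = ∑ k ∈ S, f.coeff (n - k) * g.coeff k := by
  rw [AddMonoidAlgebra.coeff_mul_apply_right, Finsupp.sum_of_support_subset _ hS _ (by simp)]
  simp [sub_eq_add_neg]

lemma coeff_mul_T_one (f : R[T;T⁻¹]) (n : ℤ) : (f * T 1).coeff n = f.coeff (n - 1) := by
  rw [T, AddMonoidAlgebra.coeff_mul_single_apply, mul_one, sub_eq_add_neg]

lemma coeff_sum_range_C_mul_T (b : ℤ → R) (N : ℕ) (n : ℤ) :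
    (∑ k ∈ range (N + 1), C (b k) * T k).coeff n = if n ∈ Set.Icc 0 (N : ℤ) then b n else 0 := by
  simp only [← single_eq_C_mul_T, AddMonoidAlgebra.coeff_sum, AddMonoidAlgebra.coeff_single,
    Finsupp.coe_finsetSum, Finset.sum_apply, Finsupp.single_apply]
  split_ifs with hn
  · lift n to ℕ using hn.1
    rw [sum_eq_single n (fun k _ hk => if_neg (by exact_mod_cast hk))
      (fun h => by simp only [mem_range, Set.mem_Icc] at h hn; omega), if_pos rfl]
  · exact sum_eq_zero fun k hk => if_neg (by simp only [mem_range, Set.mem_Icc] at hk hn; omega)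

end LaurentPolynomial

lemma Polynomial.coeff_toLaurent_of_eval_eq {R : Type*} [CommRing R] [IsDomain R] [Infinite R]
    {P : R[X]} {a : ℤ → R} {N : ℕ} (ha0 : ∀ k : ℤ, k < 0 ∨ (N : ℤ) < k → a k = 0)
    (hP : ∀ t, P.eval t = ∑ k ∈ range (N + 1), a k * t ^ k) : ⇑(toLaurent P).coeff = a := by
  obtain rfl : P = ∑ k ∈ range (N + 1), Polynomial.C (a k) * X ^ k :=
    Polynomial.funext fun t => by simp [hP, eval_finsetSum]
  ext n
  simp only [map_sum, toLaurent_C_mul_X_pow, coeff_sum_range_C_mul_T]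
  split_ifs with hn
  · rfl
  · exact (ha0 n (by simp only [Set.mem_Icc] at hn; omega)).symm

section PF2

variable {R : Type*} [CommRing R] [LinearOrder R]

/-- `b` is a Pólya frequency sequence of order two: the Toeplitz matrix `(b (m - j))` is
nonnegative and all its `2 × 2` minors are nonnegative. -/
structure IsPF2 (b : ℤ → R) : Prop where
  nonneg : ∀ k, 0 ≤ b k
  mul_le_mul : ∀ ⦃m j : ℤ⦄, j ≤ m → b (m + 1) * b (j - 1) ≤ b m * b j

namespace IsPF2

variable {b : ℤ → R}

lemma mul_le_mul_of_spread (hb : IsPF2 b) {α β s : ℤ} (hαβ : α ≤ β) (hs : 0 ≤ s) :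
    b (α - s) * b (β + s) ≤ b α * b β := by
  induction s, hs using Int.leInduction with
  | base => simp
  | succ s hs ih =>
    calc b (α - (s + 1)) * b (β + (s + 1)) = b (β + s + 1) * b (α - s - 1) := by
          rw [mul_comm]; ring_nf
      _ ≤ b (β + s) * b (α - s) := hb.mul_le_mul (by omega)
      _ ≤ b α * b β := by rw [mul_comm]; exact ih

lemma mul_le_mul_of_add_eq (hb : IsPF2 b) {x y x' y' : ℤ} (hsum : x + y = x' + y')
    (hx : x ≤ x') (hy : x ≤ y') : b x * b y ≤ b x' * b y' := by
  rcases le_total x' y' with h | h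
  · simpa [show x' - (x' - x) = x by ring, show y' + (x' - x) = y by omega]
      using hb.mul_le_mul_of_spread h (s := x' - x) (by omega)
  · simpa [show y' - (y' - x) = x by ring, show x' + (y' - x) = y by omega, mul_comm (b x')]
      using hb.mul_le_mul_of_spread h (s := y' - x) (by omega)

end IsPF2

variable [IsStrictOrderedRing R]

lemma isPF2_ite_mem_Icc (l u : ℤ) : IsPF2 fun k => if k ∈ Set.Icc l u then (1 : R) else 0 where
  nonneg k := by split_ifs <;> norm_num
  mul_le_mul m j hjm := by
    simp only [Set.mem_Icc]
    split_ifs <;> first | (exfalso; omega) | norm_num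

lemma sum_sum_nonneg_of_add_swap_nonneg {ι : Type*} [LinearOrder ι] (S : Finset ι)
    (G : ι → ι → R) (hdiag : ∀ k, G k k = 0)
    (hpair : ∀ k l, k < l → 0 ≤ G k l + G l k) : 0 ≤ ∑ k ∈ S, ∑ l ∈ S, G k l := by
  have hsym : ∑ k ∈ S, ∑ l ∈ S, (G k l + G l k) = 2 * ∑ k ∈ S, ∑ l ∈ S, G k l := by
    rw [two_mul]; simp only [sum_add_distrib]; rw [sum_comm (f := fun k l => G l k)]
  have hsym_nonneg : 0 ≤ ∑ k ∈ S, ∑ l ∈ S, (G k l + G l k) :=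
    sum_nonneg fun k _ => sum_nonneg fun l _ => by
      rcases lt_trichotomy k l with h | rfl | h
      · exact hpair k l h
      · simp [hdiag]
      · linarith [hpair l k h]
  linarith

lemma IsPF2.mul {f g : R[T;T⁻¹]} (hf : IsPF2 f.coeff) (hg : IsPF2 g.coeff) :
    IsPF2 (f * g).coeff := by
  set S := g.coeff.support ∪ (g * T 1).coeff.support
  have hconv (n : ℤ) : (f * g).coeff n = ∑ k ∈ S, f.coeff (n - k) * g.coeff k :=
    coeff_mul_eq_sum f g subset_union_left n
  have hconv' (n : ℤ) : (f * g).coeff n = ∑ k ∈ S, f.coeff (n + 1 - k) * g.coeff (k - 1) := by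
    rw [show (f * g).coeff n = (f * (g * T 1)).coeff (n + 1) by
          rw [← mul_assoc, coeff_mul_T_one, add_sub_cancel_right],
      coeff_mul_eq_sum f _ (S := S) subset_union_right]
    simp only [coeff_mul_T_one]
  refine ⟨fun n => hconv n ▸ sum_nonneg fun k _ => mul_nonneg (hf.nonneg _) (hg.nonneg _),
    fun m j hjm => ?_⟩
  rw [hconv (m + 1), hconv' (j - 1), hconv' m, hconv j, ← sub_nonneg, sum_mul_sum, sum_mul_sum,
    ← sum_sub_distrib]
  simp only [← sum_sub_distrib, sub_add_cancel]
  refine sum_sum_nonneg_of_add_swap_nonneg S _ (fun k => by ring) fun k l hkl => ?_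
  have hf_minor : f.coeff (j - l) * f.coeff (m + 1 - k) ≤ f.coeff (j - k) * f.coeff (m + 1 - l) :=
    hf.mul_le_mul_of_add_eq (by ring) (by omega) (by omega)
  have hg_minor : g.coeff (k - 1) * g.coeff l ≤ g.coeff k * g.coeff (l - 1) :=
    hg.mul_le_mul_of_add_eq (by ring) (by omega) (by omega)
  nlinarith [mul_nonneg (sub_nonneg.2 hf_minor) (sub_nonneg.2 hg_minor)]

lemma isPF2_coeff_sum_range_T (d : ℕ) :
    IsPF2 (∑ i ∈ range (d + 1), T (i : ℤ) : R[T;T⁻¹]).coeff := by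
  convert isPF2_ite_mem_Icc (R := R) 0 d using 1
  ext k
  simpa using coeff_sum_range_C_mul_T (fun _ => (1 : R)) d k

lemma IsPF2.pow {f : R[T;T⁻¹]} (hf : IsPF2 f.coeff) (n : ℕ) : IsPF2 (f ^ n).coeff := by
  induction n with
  | zero => simpa using isPF2_coeff_sum_range_T (R := R) 0
  | succ n ih => rw [pow_succ]; exact ih.mul hf

end PF2

section Schur

variable {R : Type*} [CommRing R]

def schur2 (l₁ l₂ : ℕ) (z w : R) : R := ∑ k ∈ Icc l₂ l₁, z ^ (l₁ + l₂ - k) * w ^ k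

def schurCoeff (a : ℤ → R) (i j : ℕ) : R :=
  a ((i : ℤ) + j) * a j - a ((i : ℤ) + j + 1) * a ((j : ℤ) - 1)

lemma schur2_eq_sum_range_sum_range {l₁ M : ℕ} (hM : l₁ < M) (l₂ : ℕ) (z w : R) :
    schur2 l₁ l₂ z w = ∑ U ∈ range M, ∑ V ∈ range M,
      if V ∈ Icc l₂ l₁ ∧ U + V = l₁ + l₂ then z ^ U * w ^ V else 0 := by
  rw [sum_comm]
  have hU (V : ℕ) : (∑ U ∈ range M, if V ∈ Icc l₂ l₁ ∧ U + V = l₁ + l₂ then z ^ U * w ^ V else 0)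
      = if V ∈ Icc l₂ l₁ then z ^ (l₁ + l₂ - V) * w ^ V else 0 := by
    split_ifs with hV
    · rw [mem_Icc] at hV
      rw [sum_eq_single (l₁ + l₂ - V) (fun U _ hU => if_neg (by omega))
        (fun h => by simp only [mem_range] at h; omega), if_pos ⟨mem_Icc.2 hV, by omega⟩]
    · exact sum_eq_zero fun U _ => if_neg fun h => hV h.1
  simp only [hU, sum_ite_mem, schur2]
  congr 1
  ext V
  simp only [mem_inter, mem_range, mem_Icc]
  omega

lemma sum_range_min_telescope {a : ℤ → R} (ha : a (-1) = 0) (U V : ℕ) :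
    ∑ j ∈ range (min U V + 1),
      (a ((U : ℤ) + V - j) * a j - a ((U : ℤ) + V - j + 1) * a ((j : ℤ) - 1)) = a U * a V := by
  set f : ℕ → R := fun j => a ((U : ℤ) + V + 1 - j) * a ((j : ℤ) - 1)
  have hstep (j : ℕ) : a ((U : ℤ) + V - j) * a j - a ((U : ℤ) + V - j + 1) * a ((j : ℤ) - 1)
      = f (j + 1) - f j := by
    simp only [f]; push_cast; ring_nf
  rw [sum_congr rfl fun j _ => hstep j, sum_range_sub]
  simp only [f, Nat.cast_zero, zero_sub, ha, mul_zero, sub_zero]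
  rcases le_total U V with h | h
  · rw [min_eq_left h]; push_cast; ring_nf
  · rw [min_eq_right h]; push_cast; ring_nf

variable {a : ℤ → R} {N : ℕ}

lemma schurCoeff_eq_zero (ha0 : ∀ k : ℤ, k < 0 ∨ (N : ℤ) < k → a k = 0) {i j : ℕ}
    (h : N < i + j) : schurCoeff a i j = 0 := by
  rw [schurCoeff, ha0 ((i : ℤ) + j) (.inr (by omega)), ha0 ((i : ℤ) + j + 1) (.inr (by omega))]
  ring

lemma sum_sum_ite_schurCoeff (ha0 : ∀ k : ℤ, k < 0 ∨ (N : ℤ) < k → a k = 0) {U V : ℕ}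
    (hU : U ≤ N) (hV : V ≤ N) :
    ∑ i ∈ range (N + 1), ∑ j ∈ range (N + 1),
      (if V ∈ Icc j (i + j) ∧ U + V = i + j + j then schurCoeff a i j else 0) = a U * a V := by
  have hj (j : ℕ) : (∑ i ∈ range (N + 1),
      if V ∈ Icc j (i + j) ∧ U + V = i + j + j then schurCoeff a i j else 0)
      = if j ∈ range (min U V + 1) then
          a ((U : ℤ) + V - j) * a j - a ((U : ℤ) + V - j + 1) * a ((j : ℤ) - 1) else 0 := by
    split_ifs with hjUV
    · rw [mem_range] at hjUV
      rw [sum_eq_single (U + V - 2 * j) (fun i _ hi => if_neg (by simp only [mem_Icc]; omega))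
          (fun h => by
            split_ifs
            · exact schurCoeff_eq_zero ha0 (by simp only [mem_range] at h; omega)
            · rfl),
        if_pos (by simp only [mem_Icc]; omega), schurCoeff,
        show ((U + V - 2 * j : ℕ) : ℤ) + j = U + V - j by omega]
    · exact sum_eq_zero fun i _ => if_neg (by simp only [mem_range, mem_Icc] at hjUV ⊢; omega)
  rw [sum_comm, sum_congr rfl fun j _ => hj j, sum_ite_mem,
    inter_eq_right.2 (range_subset_range.2 (by omega)),
    sum_range_min_telescope (ha0 _ (.inl (by norm_num)))]

theorem sum_schurCoeff_mul_schur2 (ha0 : ∀ k : ℤ, k < 0 ∨ (N : ℤ) < k → a k = 0) (z w : R) :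
    ∑ i ∈ range (N + 1), ∑ j ∈ range (N + 1), schurCoeff a i j * schur2 (i + j) j z w
      = (∑ k ∈ range (N + 1), a k * z ^ k) * ∑ k ∈ range (N + 1), a k * w ^ k := by
  have hterm (i j : ℕ) : schurCoeff a i j * schur2 (i + j) j z w
      = ∑ U ∈ range (N + 1), ∑ V ∈ range (N + 1),
        (if V ∈ Icc j (i + j) ∧ U + V = i + j + j then schurCoeff a i j else 0) *
          (z ^ U * w ^ V) := by
    by_cases h : i + j ≤ N
    · rw [schur2_eq_sum_range_sum_range (Nat.lt_succ_of_le h)]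
      simp only [mul_sum, mul_ite, ite_mul, mul_zero, zero_mul]
    · simp [schurCoeff_eq_zero ha0 (not_le.1 h)]
  calc _ = ∑ i ∈ range (N + 1), ∑ j ∈ range (N + 1), ∑ U ∈ range (N + 1), ∑ V ∈ range (N + 1),
        (if V ∈ Icc j (i + j) ∧ U + V = i + j + j then schurCoeff a i j else 0) *
          (z ^ U * w ^ V) :=
        sum_congr rfl fun i _ => sum_congr rfl fun j _ => hterm i j
    _ = ∑ U ∈ range (N + 1), ∑ V ∈ range (N + 1), (∑ i ∈ range (N + 1), ∑ j ∈ range (N + 1),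
        (if V ∈ Icc j (i + j) ∧ U + V = i + j + j then schurCoeff a i j else 0)) *
          (z ^ U * w ^ V) := by
      simp only [sum_mul]
      rw [sum_comm_cycle]
      exact sum_congr rfl fun U _ => sum_comm_cycle
    _ = ∑ U ∈ range (N + 1), ∑ V ∈ range (N + 1), a U * z ^ U * (a V * w ^ V) :=
        sum_congr rfl fun U hU => sum_congr rfl fun V hV => by
          rw [sum_sum_ite_schurCoeff ha0 (Nat.lt_succ_iff.1 (mem_range.1 hU))
            (Nat.lt_succ_iff.1 (mem_range.1 hV))]
          ring
    _ = _ := by rw [sum_mul_sum]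

end Schur

theorem stmt4_general (d p : ℕ) (a : ℤ → ℝ)
    (ha0 : ∀ k : ℤ, k < 0 ∨ (d * p : ℤ) < k → a k = 0)
    (ha : ∀ t : ℝ, (∑ i ∈ Finset.range (d + 1), t ^ i) ^ p
      = ∑ k ∈ Finset.range (d * p + 1), a k * t ^ k) :
    (∀ i j : ℕ, 0 ≤ a ((i : ℤ) + j) * a j - a ((i : ℤ) + j + 1) * a ((j : ℤ) - 1)) ∧
    ∀ z w : ℝ,
      (∑ i ∈ Finset.range (d + 1), z ^ i) ^ p * (∑ i ∈ Finset.range (d + 1), w ^ i) ^ p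
        = ∑ i ∈ Finset.range (d * p + 1), ∑ j ∈ Finset.range (d * p + 1),
            (a ((i : ℤ) + j) * a j - a ((i : ℤ) + j + 1) * a ((j : ℤ) - 1)) *
              ∑ k ∈ Finset.Icc j (i + j), z ^ (i + 2 * j - k) * w ^ k := by
  have ha0' : ∀ k : ℤ, k < 0 ∨ ((d * p : ℕ) : ℤ) < k → a k = 0 := by push_cast; exact ha0
  have hcoeff : ⇑((∑ i ∈ range (d + 1), T (i : ℤ)) ^ p : ℝ[T;T⁻¹]).coeff = a := by
    simpa using Polynomial.coeff_toLaurent_of_eval_eq ha0'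
      (P := (∑ i ∈ range (d + 1), X ^ i) ^ p) (by simpa using ha)
  have hpf : IsPF2 a := hcoeff ▸ (isPF2_coeff_sum_range_T d).pow p
  refine ⟨fun i j => sub_nonneg.2 (hpf.mul_le_mul (by omega)), fun z w => ?_⟩
  rw [ha z, ha w, ← sum_schurCoeff_mul_schur2 ha0' z w]
  simp only [schurCoeff, schur2, two_mul, ← add_assoc]

/-- With `a_k` the coefficients of `(1+t+⋯+t^d)^p` (and `a_k = 0` for `k < 0` or
`k > dp`), the constants `c_{ij} = a_{i+j}a_j − a_{i+j+1}a_{j−1}` are nonnegative and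
`(1+z+⋯+z^d)^p (1+w+⋯+w^d)^p = ∑_{i,j} c_{ij} S_{(i+j,j)}(z,w)`,
where `S_{(i+j,j)}(z,w) = ∑_{k=j}^{i+j} z^{i+2j−k} w^k`. -/
theorem stmt4 (d p : ℕ) (hd : 1 ≤ d) (hp : 1 ≤ p) (a : ℤ → ℝ)
    (ha0 : ∀ k : ℤ, k < 0 ∨ (d * p : ℤ) < k → a k = 0)
    (ha : ∀ t : ℝ, (∑ i ∈ Finset.range (d + 1), t ^ i) ^ p
      = ∑ k ∈ Finset.range (d * p + 1), a k * t ^ k) :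
    (∀ i j : ℕ, 0 ≤ a ((i : ℤ) + j) * a j - a ((i : ℤ) + j + 1) * a ((j : ℤ) - 1)) ∧
    ∀ z w : ℝ,
      (∑ i ∈ Finset.range (d + 1), z ^ i) ^ p * (∑ i ∈ Finset.range (d + 1), w ^ i) ^ p
        = ∑ i ∈ Finset.range (d * p + 1), ∑ j ∈ Finset.range (d * p + 1),
            (a ((i : ℤ) + j) * a j - a ((i : ℤ) + j + 1) * a ((j : ℤ) - 1)) *
              ∑ k ∈ Finset.Icc j (i + j), z ^ (i + 2 * j - k) * w ^ k :=
  stmt4_general d p a ha0 ha
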